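/- Let k ∈ ℝ with k ≠ 0, let I₁ and I₀ be functions on (0, ∞), and let F(x) = x^k on (0, ∞). Define the transformed invariants Ĩ₁(x) = F'(x)²·I₁(F(x)) - 2S(F)(x) and Ĩ₀(x) = F'(x)F''(x)·I₁(F(x)) + F'(x)³·I₀(F(x)) - (S(F))'(x), where S(F) = F'''/F' - (3/2)(F''/F')². Define the shifted invariants J₁(x) = x²I₁(x) + 1 and J₂(x) = x³I₀(x) + x²I₁(x), and analogously J̃₁(x) = x²Ĩ₁(x) + 1 and J̃₂(x) = x³Ĩ₀(x) + x²Ĩ₁(x). Then for all x > 0: J̃₁(x) = k²·J₁(x^k) and J̃₂(x) = k³·J₂(x^k). -/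

import Mathlib

/-!
On `(0, ∞)` every derivative of `F = x ^ k` is again a monomial, so the Schwarzian is
`S(F) = (1 - k²) / (2x²)` and `S(F)' = (k² - 1) / x³`. Substituting these into the transformation
rule, every term of `x² Ĩ₁(x)` and `x³ Ĩ₀(x) + x² Ĩ₁(x)` carries the factor `x ^ k` to the right
power, while the constants contributed by `S(F)` and `S(F)'` are exactly absorbed by the shifts.
-/

open Set

noncomputable def schwarzian (f : ℝ → ℝ) (x : ℝ) : ℝ :=
  deriv (deriv (deriv f)) x / deriv f x - 3 / 2 * (deriv (deriv f) x / deriv f x) ^ 2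

lemma Set.EqOn.deriv_const_mul_rpow {f : ℝ → ℝ} {c p : ℝ}
    (hf : EqOn f (fun x => c * x ^ p) (Ioi 0)) :
    EqOn (_root_.deriv f) (fun x => c * p * x ^ (p - 1)) (Ioi 0) := fun x hx => by
  rw [hf.deriv isOpen_Ioi hx, deriv_const_mul _ (Real.differentiableAt_rpow_const_of_ne p
    hx.ne'), Real.deriv_rpow_const, ← mul_assoc]

lemma schwarzian_eqOn_const_mul_rpow {F : ℝ → ℝ} {c k : ℝ} (hc : c ≠ 0) (hk : k ≠ 0)
    (hF : EqOn F (fun x => c * x ^ k) (Ioi 0)) :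
    EqOn (schwarzian F) (fun x => (1 - k ^ 2) / 2 * x ^ (-2 : ℝ)) (Ioi 0) := fun x hx => by
  have hx0 : x ≠ 0 := hx.ne'
  have hxk : x ^ k ≠ 0 := (Real.rpow_pos_of_pos hx k).ne'
  have h1 := hF.deriv_const_mul_rpow
  have h2 := h1.deriv_const_mul_rpow
  have h3 := h2.deriv_const_mul_rpow
  simp only [schwarzian, h1 hx, h2 hx, h3 hx, Real.rpow_sub_one hx0,
    Real.rpow_neg hx.le, Real.rpow_two]
  field_simp
  ring

/-- Transformation rule of the shifted invariants `J₁ = x²I₁ + 1`,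
`J₂ = x³I₀ + x²I₁` under the power transformation `x → x^k`:
`J̃₁(x) = k²·J₁(x^k)` and `J̃₂(x) = k³·J₂(x^k)`. -/
theorem stmt_5 (k : ℝ) (hk : k ≠ 0) (I₁ I₀ : ℝ → ℝ)
    (F : ℝ → ℝ) (hF : ∀ x : ℝ, 0 < x → F x = x ^ k)
    (SF : ℝ → ℝ)
    (hSF : ∀ x : ℝ, 0 < x → SF x = deriv (deriv (deriv F)) x / deriv F x
        - (3 / 2) * (deriv (deriv F) x / deriv F x) ^ 2)
    (tI₁ tI₀ : ℝ → ℝ)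
    (htI₁ : ∀ x : ℝ, 0 < x → tI₁ x = (deriv F x) ^ 2 * I₁ (F x) - 2 * SF x)
    (htI₀ : ∀ x : ℝ, 0 < x → tI₀ x = deriv F x * deriv (deriv F) x * I₁ (F x)
        + (deriv F x) ^ 3 * I₀ (F x) - deriv SF x)
    (J₁ J₂ tJ₁ tJ₂ : ℝ → ℝ)
    (hJ₁ : ∀ x : ℝ, 0 < x → J₁ x = x ^ 2 * I₁ x + 1)
    (hJ₂ : ∀ x : ℝ, 0 < x → J₂ x = x ^ 3 * I₀ x + x ^ 2 * I₁ x)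
    (htJ₁ : ∀ x : ℝ, 0 < x → tJ₁ x = x ^ 2 * tI₁ x + 1)
    (htJ₂ : ∀ x : ℝ, 0 < x → tJ₂ x = x ^ 3 * tI₀ x + x ^ 2 * tI₁ x) :
    ∀ x : ℝ, 0 < x → tJ₁ x = k ^ 2 * J₁ (x ^ k) ∧ tJ₂ x = k ^ 3 * J₂ (x ^ k) := by
  have hFk : EqOn F (fun x => 1 * x ^ k) (Ioi 0) := fun x hx => (hF x hx).trans (one_mul _).symm
  have hF' := hFk.deriv_const_mul_rpow
  have hF'' := hF'.deriv_const_mul_rpow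
  have hS : EqOn SF (fun x => (1 - k ^ 2) / 2 * x ^ (-2 : ℝ)) (Ioi 0) :=
    EqOn.trans (fun x hx => hSF x hx : EqOn SF (schwarzian F) (Ioi 0))
      (schwarzian_eqOn_const_mul_rpow one_ne_zero hk hFk)
  have hS' := hS.deriv_const_mul_rpow
  intro x hx
  have hxk : 0 < x ^ k := Real.rpow_pos_of_pos hx k
  simp only [htJ₁ x hx, htJ₂ x hx, htI₁ x hx, htI₀ x hx, hJ₁ _ hxk, hJ₂ _ hxk, hFk hx, hF' hx,
    hF'' hx, hS hx, hS' hx, Real.rpow_sub_one hx.ne', Real.rpow_neg hx.le, Real.rpow_two]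
  constructor <;> field_simp <;> ring
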